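/- arXiv:1805.10843 — 2 statements merged into one kernel-verified Lean document; each statement's English description precedes it below -/
import Mathlib

section
/- For every μ ∈ (0,1) and every σ² > 0, the simplex density integrates to one over the unit interval: ∫₀¹ (2πσ²(y(1−y))³)^{−1/2} · exp(−d(y;μ)/(2σ²)) dy = 1. -/
/-!
With `c = μ(1-μ)`, the residual `g(y) = (y - μ)/(c √(y(1-y)))` satisfies `g² = d(y;μ)`, and its
companion `k(y) = (y + μ - 2μy)/(c √(y(1-y)))` satisfies `k² = g² + 4/c`, `g' = k/(2y(1-y))` and
`k' = g/(2y(1-y))`. If `Φ` is a primitive of `t ↦ exp(-t²/(2σ²))`, these identities make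
`(Φ(g) - (1-2μ) e^{2/(cσ²)} Φ(k)) / √(2πσ²)` a primitive of the density on `(0,1)`. As `y → 0⁺`,
`g → -∞` and `k → +∞`, while both tend to `+∞` as `y → 1⁻`, so the Gaussian integral
`∫ exp(-t²/(2σ²)) = √(2πσ²)` yields the value `1`. Since the density is nonnegative, its
integrability on `(0,1)` comes for free.
-/

open Real MeasureTheory

/-- The unit deviance of the simplex distribution. -/
noncomputable def simplexDev (y μ : ℝ) : ℝ :=
  (y - μ)^2 / (y * (1 - y) * μ^2 * (1 - μ)^2)

/-- The simplex density. -/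
noncomputable def simplexPdf (y μ σ2 : ℝ) : ℝ :=
  (2 * Real.pi * σ2 * (y * (1 - y))^3) ^ (-(1/2) : ℝ) *
    Real.exp (-(simplexDev y μ) / (2 * σ2))

open Filter Set Topology

theorem intervalIntegral.integral_eq_sub_of_hasDerivAt_of_tendsto_of_nonneg {f f' : ℝ → ℝ}
    {a b fa fb : ℝ} (hab : a < b) (hderiv : ∀ x ∈ Ioo a b, HasDerivAt f (f' x) x)
    (hpos : ∀ x ∈ Ioo a b, 0 ≤ f' x) (ha : Tendsto f (𝓝[>] a) (𝓝 fa))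
    (hb : Tendsto f (𝓝[<] b) (𝓝 fb)) :
    ∫ y in a..b, f' y = fb - fa := by
  refine integral_eq_sub_of_hasDerivAt_of_tendsto hab hderiv ?_ ha hb
  set F : ℝ → ℝ := Function.update (Function.update f a fa) b fb
  have hFf : ∀ x ∈ Ioo a b, F x = f x := fun x hx => by
    simp only [F, Function.update_of_ne hx.2.ne, Function.update_of_ne hx.1.ne']
  have hFderiv : ∀ x ∈ Ioo a b, HasDerivAt F (f' x) x := fun x hx =>
    (hderiv x hx).congr_of_eventuallyEq <| eventually_of_mem (Ioo_mem_nhds hx.1 hx.2) hFf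
  have hFcont : ContinuousOn F (Icc a b) := by
    rw [continuousOn_update_iff, continuousOn_update_iff, Icc_sdiff_right, Ico_sdiff_left]
    refine ⟨⟨fun z hz => (hderiv z hz).continuousAt.continuousWithinAt, fun _ =>
      ha.mono_left (nhdsWithin_mono _ Ioo_subset_Ioi_self)⟩, fun _ => ?_⟩
    refine (hb.congr' ?_).mono_left (nhdsWithin_mono _ Ico_subset_Iio_self)
    filter_upwards [Ioo_mem_nhdsLT hab] with z hz using
      (Function.update_of_ne hz.1.ne' _ _).symm
  refine intervalIntegrable_deriv_of_nonneg (g := F) ?_ ?_ ?_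
  all_goals simpa only [uIcc_of_le hab.le, min_eq_left hab.le, max_eq_right hab.le]

noncomputable def gaussPrimitive (v t : ℝ) : ℝ := ∫ s in (0 : ℝ)..t, exp (-s ^ 2 / (2 * v))

section GaussPrimitive

variable {v : ℝ}

theorem hasDerivAt_gaussPrimitive (t : ℝ) :
    HasDerivAt (gaussPrimitive v) (exp (-t ^ 2 / (2 * v))) t :=
  ((by fun_prop : Continuous fun s : ℝ => exp (-s ^ 2 / (2 * v))).integral_hasStrictDerivAt 0
    t).hasDerivAt

theorem gaussPrimitive_neg (t : ℝ) : gaussPrimitive v (-t) = -gaussPrimitive v t := by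
  have h := intervalIntegral.integral_comp_neg (a := 0) (b := t) fun s => exp (-s ^ 2 / (2 * v))
  simp only [neg_sq, neg_zero] at h
  rw [gaussPrimitive, gaussPrimitive, intervalIntegral.integral_symm, h]

theorem tendsto_gaussPrimitive_atTop (hv : 0 < v) :
    Tendsto (gaussPrimitive v) atTop (𝓝 (√(2 * π * v) / 2)) := by
  have hf : (fun s : ℝ => exp (-s ^ 2 / (2 * v))) = fun s => exp (-(2 * v)⁻¹ * s ^ 2) := by
    ext s; ring_nf
  have hI : ∫ s in Ioi 0, exp (-s ^ 2 / (2 * v)) = √(2 * π * v) / 2 := by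
    rw [hf, integral_gaussian_Ioi, div_inv_eq_mul]
    ring_nf
  exact hI ▸ intervalIntegral_tendsto_integral_Ioi 0
    (hf ▸ integrable_exp_neg_mul_sq (by positivity)).integrableOn tendsto_id

theorem tendsto_gaussPrimitive_atBot (hv : 0 < v) :
    Tendsto (gaussPrimitive v) atBot (𝓝 (-(√(2 * π * v) / 2))) :=
  ((tendsto_gaussPrimitive_atTop hv).comp tendsto_neg_atBot_atTop).neg.congr fun t => by
    simp [gaussPrimitive_neg]

end GaussPrimitive

theorem HasDerivAt.div_sqrt_mul_one_sub {p : ℝ → ℝ} {p' y : ℝ} (hp : HasDerivAt p p' y)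
    (hy : y ∈ Ioo 0 1) :
    HasDerivAt (fun x => p x / √(x * (1 - x)))
      ((2 * p' * (y * (1 - y)) - p y * (1 - 2 * y)) / (2 * √(y * (1 - y)) ^ 3)) y := by
  have ht : 0 < y * (1 - y) := mul_pos hy.1 (sub_pos.2 hy.2)
  have hs : 0 < √(y * (1 - y)) := sqrt_pos.2 ht
  have hsq : HasDerivAt (fun x => √(x * (1 - x))) ((1 - 2 * y) / (2 * √(y * (1 - y)))) y := by
    refine (((hasDerivAt_id' y).mul ((hasDerivAt_id' y).const_sub 1)).sqrt ht.ne').congr_deriv ?_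
    simp only [Pi.mul_apply]
    ring
  refine (hp.div hsq hs.ne').congr_deriv ?_
  field_simp
  linear_combination (2 * p') * sq_sqrt ht.le

theorem tendsto_sqrt_mul_one_sub_nhdsGT_zero {a : ℝ} (ha : a = 0 ∨ a = 1) :
    Tendsto (fun y => √(y * (1 - y))) (𝓝[Ioo 0 1] a) (𝓝[>] 0) := by
  refine tendsto_nhdsWithin_iff.2 ⟨?_, ?_⟩
  · have h : Tendsto (fun y => √(y * (1 - y))) (𝓝 a) (𝓝 √(a * (1 - a))) :=
      (by fun_prop : Continuous fun y : ℝ => √(y * (1 - y))).tendsto a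
    rcases ha with rfl | rfl <;> simpa using h.mono_left nhdsWithin_le_nhds
  · filter_upwards [self_mem_nhdsWithin] with y hy
    exact sqrt_pos.2 (mul_pos hy.1 (sub_pos.2 hy.2))

theorem tendsto_div_sqrt_mul_one_sub_atTop {p : ℝ → ℝ} (hp : Continuous p) {a : ℝ}
    (ha : a = 0 ∨ a = 1) (hpa : 0 < p a) :
    Tendsto (fun y => p y / √(y * (1 - y))) (𝓝[Ioo 0 1] a) atTop := by
  refine (((hp.tendsto a).mono_left nhdsWithin_le_nhds).pos_mul_atTop hpa
    (tendsto_sqrt_mul_one_sub_nhdsGT_zero ha).inv_tendsto_nhdsGT_zero).congr fun y => ?_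
  exact (div_eq_mul_inv _ _).symm

noncomputable def simplexResidual (μ y : ℝ) : ℝ := (y - μ) / (μ * (1 - μ)) / √(y * (1 - y))

noncomputable def simplexResidualConj (μ y : ℝ) : ℝ :=
  (y + μ - 2 * μ * y) / (μ * (1 - μ)) / √(y * (1 - y))

section SimplexResidual

variable {μ y : ℝ}

theorem sq_simplexResidual (hy : y ∈ Icc 0 1) : simplexResidual μ y ^ 2 = simplexDev y μ := by
  rw [simplexResidual, simplexDev, div_pow, div_pow, sq_sqrt (mul_nonneg hy.1 (sub_nonneg.2 hy.2)),
    div_div]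
  congr 1
  ring

theorem sq_simplexResidualConj (hμ : μ ∈ Ioo 0 1) (hy : y ∈ Ioo 0 1) :
    simplexResidualConj μ y ^ 2 = simplexResidual μ y ^ 2 + 4 / (μ * (1 - μ)) := by
  have := hμ.1.ne'
  have := (sub_pos.2 hμ.2).ne'
  have := hy.1.ne'
  have := (sub_pos.2 hy.2).ne'
  rw [simplexResidualConj, simplexResidual, div_pow, div_pow, div_pow, div_pow,
    sq_sqrt (mul_pos hy.1 (sub_pos.2 hy.2)).le]
  field_simp
  ring

theorem simplexResidualConj_sub (hμ : μ ∈ Ioo 0 1) :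
    simplexResidualConj μ y - (1 - 2 * μ) * simplexResidual μ y = 2 / √(y * (1 - y)) := by
  have := hμ.1.ne'
  have := (sub_pos.2 hμ.2).ne'
  rw [simplexResidualConj, simplexResidual, ← mul_div_assoc, ← sub_div]
  congr 1
  field_simp
  ring

theorem hasDerivAt_simplexResidual (hy : y ∈ Ioo 0 1) :
    HasDerivAt (simplexResidual μ) (simplexResidualConj μ y / (2 * (y * (1 - y)))) y := by
  refine (((hasDerivAt_id' y).sub_const μ).div_const (μ * (1 - μ))).div_sqrt_mul_one_sub hy
    |>.congr_deriv ?_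
  have ht := mul_pos hy.1 (sub_pos.2 hy.2)
  have hs := sqrt_pos.2 ht
  rw [simplexResidualConj, pow_succ, sq_sqrt ht.le]
  field_simp
  ring

theorem hasDerivAt_simplexResidualConj (hy : y ∈ Ioo 0 1) :
    HasDerivAt (simplexResidualConj μ) (simplexResidual μ y / (2 * (y * (1 - y)))) y := by
  have hnum : HasDerivAt (fun x => x + μ - 2 * μ * x) (1 - 2 * μ) y :=
    (((hasDerivAt_id' y).add_const μ).sub ((hasDerivAt_id' y).const_mul (2 * μ))).congr_deriv
      (by ring)
  refine (hnum.div_const (μ * (1 - μ))).div_sqrt_mul_one_sub hy |>.congr_deriv ?_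
  have ht := mul_pos hy.1 (sub_pos.2 hy.2)
  have hs := sqrt_pos.2 ht
  rw [simplexResidual, pow_succ, sq_sqrt ht.le]
  field_simp
  ring

end SimplexResidual

theorem simplexPdf_eq {μ σ2 y : ℝ} (hσ2 : 0 ≤ σ2) (hy : y ∈ Icc 0 1) :
    simplexPdf y μ σ2 =
      exp (-simplexDev y μ / (2 * σ2)) / (√(2 * π * σ2) * √(y * (1 - y)) ^ 3) := by
  have ht : 0 ≤ y * (1 - y) := mul_nonneg hy.1 (sub_nonneg.2 hy.2)
  have hcube : √((y * (1 - y)) ^ 3) = √(y * (1 - y)) ^ 3 := by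
    rw [pow_succ, sqrt_mul (by positivity), sqrt_sq ht, pow_succ, sq_sqrt ht]
  rw [simplexPdf, rpow_neg (by positivity), ← sqrt_eq_rpow, sqrt_mul (by positivity), hcube,
    inv_mul_eq_div]

theorem simplexPdf_nonneg {μ σ2 y : ℝ} (hσ2 : 0 ≤ σ2) (hy : y ∈ Icc 0 1) :
    0 ≤ simplexPdf y μ σ2 := by
  rw [simplexPdf_eq hσ2 hy]
  positivity

noncomputable def simplexPrimitive (μ σ2 y : ℝ) : ℝ :=
  (gaussPrimitive σ2 (simplexResidual μ y) -
    (1 - 2 * μ) * exp (2 / (μ * (1 - μ) * σ2)) * gaussPrimitive σ2 (simplexResidualConj μ y)) /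
      √(2 * π * σ2)

section SimplexPrimitive

variable {μ σ2 : ℝ}

theorem hasDerivAt_simplexPrimitive (hμ : μ ∈ Ioo 0 1) (hσ2 : 0 < σ2) {y : ℝ}
    (hy : y ∈ Ioo 0 1) : HasDerivAt (simplexPrimitive μ σ2) (simplexPdf y μ σ2) y := by
  refine ((((hasDerivAt_gaussPrimitive _).comp y (hasDerivAt_simplexResidual hy)).sub
    (((hasDerivAt_gaussPrimitive _).comp y (hasDerivAt_simplexResidualConj hy)).const_mul
      _)).div_const _).congr_deriv ?_
  rw [simplexPdf_eq hσ2.le (Ioo_subset_Icc_self hy), ← sq_simplexResidual (Ioo_subset_Icc_self hy)]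
  set g := simplexResidual μ y
  set k := simplexResidualConj μ y
  set C := (1 - 2 * μ) * exp (2 / (μ * (1 - μ) * σ2))
  have ht := mul_pos hy.1 (sub_pos.2 hy.2)
  have hexp : exp (2 / (μ * (1 - μ) * σ2)) * exp (-k ^ 2 / (2 * σ2)) = exp (-g ^ 2 / (2 * σ2)) := by
    have := hμ.1.ne'
    have := (sub_pos.2 hμ.2).ne'
    rw [← exp_add, sq_simplexResidualConj hμ hy]
    congr 1
    field_simp
    ring
  have hnum : exp (-g ^ 2 / (2 * σ2)) * k - C * (exp (-k ^ 2 / (2 * σ2)) * g) =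
      exp (-g ^ 2 / (2 * σ2)) * (2 / √(y * (1 - y))) := by
    rw [← simplexResidualConj_sub hμ, ← hexp]
    ring
  calc _ = (exp (-g ^ 2 / (2 * σ2)) * k - C * (exp (-k ^ 2 / (2 * σ2)) * g)) /
        (2 * (y * (1 - y)) * √(2 * π * σ2)) := by
        field_simp
    _ = _ := by
      rw [hnum, pow_succ √(y * (1 - y)) 2, sq_sqrt ht.le]
      field_simp

theorem tendsto_simplexPrimitive_nhdsGT_zero (hμ : μ ∈ Ioo 0 1) (hσ2 : 0 < σ2) :
    Tendsto (simplexPrimitive μ σ2) (𝓝[>] 0)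
      (𝓝 (-(1 + (1 - 2 * μ) * exp (2 / (μ * (1 - μ) * σ2))) / 2)) := by
  have hc : 0 < μ * (1 - μ) := mul_pos hμ.1 (sub_pos.2 hμ.2)
  rw [← nhdsWithin_Ioo_eq_nhdsGT one_pos]
  have hg : Tendsto (simplexResidual μ) (𝓝[Ioo 0 1] 0) atBot := by
    refine (tendsto_neg_atTop_atBot.comp (tendsto_div_sqrt_mul_one_sub_atTop
      (p := fun y => (μ - y) / (μ * (1 - μ))) (by fun_prop) (Or.inl rfl)
      (by simpa using div_pos hμ.1 hc))).congr fun y => ?_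
    simp only [Function.comp_apply, simplexResidual, ← neg_div, neg_sub]
  have hk : Tendsto (simplexResidualConj μ) (𝓝[Ioo 0 1] 0) atTop :=
    tendsto_div_sqrt_mul_one_sub_atTop (by fun_prop) (Or.inl rfl) (by simpa using div_pos hμ.1 hc)
  have := (((tendsto_gaussPrimitive_atBot hσ2).comp hg).sub
    (((tendsto_gaussPrimitive_atTop hσ2).comp hk).const_mul
      ((1 - 2 * μ) * exp (2 / (μ * (1 - μ) * σ2))))).div_const √(2 * π * σ2)
  convert this using 2
  · rfl
  · have : 0 < √(2 * π * σ2) := sqrt_pos.2 (by positivity)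
    field_simp
    ring

theorem tendsto_simplexPrimitive_nhdsLT_one (hμ : μ ∈ Ioo 0 1) (hσ2 : 0 < σ2) :
    Tendsto (simplexPrimitive μ σ2) (𝓝[<] 1)
      (𝓝 ((1 - (1 - 2 * μ) * exp (2 / (μ * (1 - μ) * σ2))) / 2)) := by
  have hp : 0 < (1 - μ) / (μ * (1 - μ)) := div_pos (sub_pos.2 hμ.2) (mul_pos hμ.1 (sub_pos.2 hμ.2))
  rw [← nhdsWithin_Ioo_eq_nhdsLT one_pos]
  have hg : Tendsto (simplexResidual μ) (𝓝[Ioo 0 1] 1) atTop :=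
    tendsto_div_sqrt_mul_one_sub_atTop (by fun_prop) (Or.inr rfl) hp
  have hk : Tendsto (simplexResidualConj μ) (𝓝[Ioo 0 1] 1) atTop :=
    tendsto_div_sqrt_mul_one_sub_atTop (by fun_prop) (Or.inr rfl) (by convert hp using 2; ring)
  have := (((tendsto_gaussPrimitive_atTop hσ2).comp hg).sub
    (((tendsto_gaussPrimitive_atTop hσ2).comp hk).const_mul
      ((1 - 2 * μ) * exp (2 / (μ * (1 - μ) * σ2))))).div_const √(2 * π * σ2)
  convert this using 2
  · rfl
  · have : 0 < √(2 * π * σ2) := sqrt_pos.2 (by positivity)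
    field_simp

end SimplexPrimitive

/-- The simplex density integrates to one over the unit interval. -/
theorem simplexPdf_integral_eq_one (μ σ2 : ℝ) (hμ : μ ∈ Set.Ioo (0:ℝ) 1)
    (hσ2 : 0 < σ2) :
    ∫ y in (0:ℝ)..1, simplexPdf y μ σ2 = 1 := by
  rw [intervalIntegral.integral_eq_sub_of_hasDerivAt_of_tendsto_of_nonneg one_pos
    (fun y hy => hasDerivAt_simplexPrimitive hμ hσ2 hy)
    (fun y hy => simplexPdf_nonneg hσ2.le (Ioo_subset_Icc_self hy))
    (tendsto_simplexPrimitive_nhdsGT_zero hμ hσ2) (tendsto_simplexPrimitive_nhdsLT_one hμ hσ2)]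
  ring
end

section
/- For every μ ∈ (0,1) and every σ² > 0, the score with respect to μ has zero expectation under the simplex distribution: ∫₀¹ u(y,μ) · (y−μ) · p(y;μ,σ²) dy = 0. (This yields the off-diagonal blocks of Fisher's information being zero, i.e. the global orthogonality of the mean and dispersion parameters.) -/
open Real MeasureTheory

/-- The quantity u(y,μ). -/
noncomputable def simplexU (y μ : ℝ) : ℝ :=
  (1 / (μ * (1 - μ))) * (simplexDev y μ + 1 / (μ^2 * (1 - μ)^2))

open Set

theorem setIntegral_eq_zero_of_invOn_of_abs_deriv_smul_comp_eq_neg {F : Type*}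
    [NormedAddCommGroup F] [NormedSpace ℝ F] {s : Set ℝ} {f f' : ℝ → ℝ} {g : ℝ → F}
    (hs : MeasurableSet s) (hf' : ∀ x ∈ s, HasDerivWithinAt f (f' x) s x)
    (hmaps : MapsTo f s s) (hinv : InvOn f f s s)
    (hg : ∀ x ∈ s, |f' x| • g (f x) = -g x) :
    ∫ x in s, g x = 0 := by
  have hbij : BijOn f s s := hinv.bijOn hmaps hmaps
  have h := integral_image_eq_integral_abs_deriv_smul hs hf' hbij.injOn g
  rw [hbij.image_eq, setIntegral_congr_fun hs hg, integral_neg] at h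
  have h2 : (2 : ℝ) • ∫ x in s, g x = 0 := by
    rw [two_smul]
    nth_rewrite 2 [h]
    exact add_neg_cancel _
  exact (smul_eq_zero.mp h2).resolve_left two_ne_zero

noncomputable def simplexReflect (μ y : ℝ) : ℝ :=
  μ ^ 2 * (1 - y) / (μ ^ 2 * (1 - y) + (1 - μ) ^ 2 * y)

section simplexReflect

variable {μ y : ℝ}

lemma simplexReflect_denom_pos (hμ : μ ∈ Ioo 0 1) (hy : y ∈ Icc 0 1) :
    0 < μ ^ 2 * (1 - y) + (1 - μ) ^ 2 * y := by
  obtain ⟨hμ0, hμ1⟩ := hμ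
  obtain ⟨hy0, hy1⟩ := hy
  nlinarith [mul_nonneg (sq_nonneg μ) (sub_nonneg.2 hy1), mul_nonneg hy0 (sq_nonneg (1 - μ)),
    mul_pos hμ0 (sub_pos.2 hμ1)]

lemma simplexReflect_sub (hμ : μ ∈ Ioo 0 1) (hy : y ∈ Icc 0 1) :
    simplexReflect μ y - μ =
      μ * (1 - μ) / (μ ^ 2 * (1 - y) + (1 - μ) ^ 2 * y) * (μ - y) := by
  rw [simplexReflect, div_sub' (simplexReflect_denom_pos hμ hy).ne', div_mul_eq_mul_div]
  congr 1
  ring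

lemma one_sub_simplexReflect (hμ : μ ∈ Ioo 0 1) (hy : y ∈ Icc 0 1) :
    1 - simplexReflect μ y = (1 - μ) ^ 2 * y / (μ ^ 2 * (1 - y) + (1 - μ) ^ 2 * y) := by
  rw [simplexReflect, one_sub_div (simplexReflect_denom_pos hμ hy).ne']
  congr 1
  ring

lemma simplexReflect_mul_one_sub (hμ : μ ∈ Ioo 0 1) (hy : y ∈ Icc 0 1) :
    simplexReflect μ y * (1 - simplexReflect μ y) =
      (μ * (1 - μ) / (μ ^ 2 * (1 - y) + (1 - μ) ^ 2 * y)) ^ 2 * (y * (1 - y)) := by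
  rw [one_sub_simplexReflect hμ hy, simplexReflect]
  ring

lemma simplexReflect_mem_Ioo (hμ : μ ∈ Ioo 0 1) (hy : y ∈ Ioo 0 1) :
    simplexReflect μ y ∈ Ioo 0 1 := by
  have h1μ : 0 < 1 - μ := sub_pos.2 hμ.2
  have h1y : 0 < 1 - y := sub_pos.2 hy.2
  have := hμ.1
  have := hy.1
  refine ⟨by unfold simplexReflect; positivity, sub_pos.1 ?_⟩
  rw [one_sub_simplexReflect hμ (Ioo_subset_Icc_self hy)]
  positivity

lemma simplexReflect_simplexReflect (hμ : μ ∈ Ioo 0 1) (hy : y ∈ Icc 0 1) :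
    simplexReflect μ (simplexReflect μ y) = y := by
  have hw := (simplexReflect_denom_pos hμ hy).ne'
  have hμ0 := hμ.1.ne'
  have hμ1 : 1 - μ ≠ 0 := (sub_pos.2 hμ.2).ne'
  rw [simplexReflect, one_sub_simplexReflect hμ hy, simplexReflect]
  generalize μ ^ 2 * (1 - y) + (1 - μ) ^ 2 * y = w at hw ⊢
  field_simp
  ring

lemma hasDerivAt_simplexReflect (hμ : μ ∈ Ioo 0 1) (hy : y ∈ Icc 0 1) :
    HasDerivAt (simplexReflect μ)
      (-(μ * (1 - μ) / (μ ^ 2 * (1 - y) + (1 - μ) ^ 2 * y)) ^ 2) y := by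
  have hw := (simplexReflect_denom_pos hμ hy).ne'
  have hnum : HasDerivAt (fun y : ℝ => μ ^ 2 * (1 - y)) (-μ ^ 2) y := by
    simpa using ((hasDerivAt_id y).const_sub 1).const_mul (μ ^ 2)
  have hden := hnum.add ((hasDerivAt_id' y).const_mul ((1 - μ) ^ 2))
  refine (hnum.div hden hw).congr_deriv ?_
  rw [div_pow, ← neg_div, Pi.add_apply, div_left_inj' (pow_ne_zero 2 hw)]
  ring

lemma simplexDev_simplexReflect (hμ : μ ∈ Ioo 0 1) (hy : y ∈ Icc 0 1) :
    simplexDev (simplexReflect μ y) μ = simplexDev y μ := by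
  have hw := (simplexReflect_denom_pos hμ hy).ne'
  rw [simplexDev, simplexDev, simplexReflect_sub hμ hy,
    simplexReflect_mul_one_sub hμ hy]
  generalize μ ^ 2 * (1 - y) + (1 - μ) ^ 2 * y = w at hw ⊢
  field_simp
  ring

lemma simplexPdf_simplexReflect {σ2 : ℝ} (hμ : μ ∈ Ioo 0 1) (hy : y ∈ Icc 0 1)
    (hσ2 : 0 ≤ σ2) :
    simplexPdf (simplexReflect μ y) μ σ2 =
      ((μ * (1 - μ) / (μ ^ 2 * (1 - y) + (1 - μ) ^ 2 * y)) ^ 3)⁻¹ * simplexPdf y μ σ2 := by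
  have hc : 0 < μ * (1 - μ) / (μ ^ 2 * (1 - y) + (1 - μ) ^ 2 * y) :=
    div_pos (mul_pos hμ.1 (sub_pos.2 hμ.2)) (simplexReflect_denom_pos hμ hy)
  have hbase : 0 ≤ 2 * π * σ2 * (y * (1 - y)) ^ 3 := by
    have := mul_nonneg hy.1 (sub_nonneg.2 hy.2)
    positivity
  rw [simplexPdf, simplexPdf, simplexDev_simplexReflect hμ hy, simplexReflect_mul_one_sub hμ hy]
  generalize μ * (1 - μ) / (μ ^ 2 * (1 - y) + (1 - μ) ^ 2 * y) = c at hc ⊢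
  have hsq : ((c ^ 3) ^ 2) ^ (-(1 / 2) : ℝ) = (c ^ 3)⁻¹ := by
    rw [rpow_neg (by positivity), ← sqrt_eq_rpow, sqrt_sq (by positivity)]
  rw [show 2 * π * σ2 * (c ^ 2 * (y * (1 - y))) ^ 3 = 2 * π * σ2 * (y * (1 - y)) ^ 3 * (c ^ 3) ^ 2
    by ring, mul_rpow hbase (by positivity), hsq]
  ring

lemma simplexScore_simplexReflect {σ2 : ℝ} (hμ : μ ∈ Ioo 0 1) (hy : y ∈ Icc 0 1)
    (hσ2 : 0 ≤ σ2) :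
    (μ * (1 - μ) / (μ ^ 2 * (1 - y) + (1 - μ) ^ 2 * y)) ^ 2 *
        (simplexU (simplexReflect μ y) μ * (simplexReflect μ y - μ) *
          simplexPdf (simplexReflect μ y) μ σ2) =
      -(simplexU y μ * (y - μ) * simplexPdf y μ σ2) := by
  have hc : 0 < μ * (1 - μ) / (μ ^ 2 * (1 - y) + (1 - μ) ^ 2 * y) :=
    div_pos (mul_pos hμ.1 (sub_pos.2 hμ.2)) (simplexReflect_denom_pos hμ hy)
  rw [simplexU, simplexU, simplexDev_simplexReflect hμ hy, simplexReflect_sub hμ hy,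
    simplexPdf_simplexReflect hμ hy hσ2]
  generalize μ * (1 - μ) / (μ ^ 2 * (1 - y) + (1 - μ) ^ 2 * y) = c at hc ⊢
  field_simp
  ring

end simplexReflect

/-- The score with respect to μ has zero expectation under the simplex
distribution. -/
theorem simplexPdf_score_mean_zero (μ σ2 : ℝ) (hμ : μ ∈ Set.Ioo (0:ℝ) 1)
    (hσ2 : 0 < σ2) :
    ∫ y in (0:ℝ)..1, simplexU y μ * (y - μ) * simplexPdf y μ σ2 = 0 := by
  have hinv : LeftInvOn (simplexReflect μ) (simplexReflect μ) (Ioo 0 1) := fun y hy =>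
    simplexReflect_simplexReflect hμ (Ioo_subset_Icc_self hy)
  rw [intervalIntegral.integral_of_le zero_le_one, integral_Ioc_eq_integral_Ioo]
  refine setIntegral_eq_zero_of_invOn_of_abs_deriv_smul_comp_eq_neg measurableSet_Ioo
    (fun y hy => (hasDerivAt_simplexReflect hμ (Ioo_subset_Icc_self hy)).hasDerivWithinAt)
    (fun y hy => simplexReflect_mem_Ioo hμ hy) ⟨hinv, hinv⟩ fun y hy => ?_
  rw [smul_eq_mul, abs_neg, abs_sq]
  exact simplexScore_simplexReflect hμ (Ioo_subset_Icc_self hy) hσ2.le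
end
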